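/- arXiv:1512.07725 — 4 statements merged into one kernel-verified Lean document; each statement's English description precedes it below -/
import Mathlib

section
/- Let λ < 0, let D ⊆ ℝⁿ be open, and let u : ℝⁿ → ℝ be twice continuously differentiable on D. Define ū(x, x') = u(x)·cosh(√(−2λ)·x'). Then u satisfies (1/2)Δu(x) = λ·u(x) for all x ∈ D if and only if ū is harmonic on D × ℝ, i.e. Δū(x, x') = 0 for all (x, x') ∈ D × ℝ. -/
/-! The second derivative of `f` at `x` along `m` is the second derivative of
`t ↦ f (x + t • m)` at `0`. Along the directions `(eᵢ, 0)` the lift `ū = u(x) cosh(c x')` is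
`cosh(c x')` times `u` restricted to a line, and along `(0, 1)` it is `u(x)` times a translate of
`cosh(c ·)`; hence `Δū = cosh(c x') (Δu + c² u)`. With `c² = -2λ` and `cosh > 0`, this vanishes
exactly where `½ Δu = λ u`. -/

open scoped BigOperators

/-- The Laplacian of `u : ℝⁿ → ℝ` at `x`: the sum of second partial derivatives with respect
to the standard orthonormal basis. -/
noncomputable def lap {n : ℕ} (u : EuclideanSpace ℝ (Fin n) → ℝ)
    (x : EuclideanSpace ℝ (Fin n)) : ℝ :=
  ∑ i, iteratedFDeriv ℝ 2 u x ![EuclideanSpace.single i 1, EuclideanSpace.single i 1]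

/-- The Laplacian on `ℝⁿ × ℝ ≅ ℝⁿ⁺¹`: the sum `Δ_x + ∂²/∂x'²` of second partial derivatives
with respect to the standard orthonormal basis of `ℝⁿ × ℝ`. -/
noncomputable def lapProd {n : ℕ} (F : EuclideanSpace ℝ (Fin n) × ℝ → ℝ)
    (p : EuclideanSpace ℝ (Fin n) × ℝ) : ℝ :=
  (∑ i, iteratedFDeriv ℝ 2 F p
      ![(EuclideanSpace.single i 1, (0 : ℝ)), (EuclideanSpace.single i 1, (0 : ℝ))])
    + iteratedFDeriv ℝ 2 F p
        ![((0 : EuclideanSpace ℝ (Fin n)), (1 : ℝ)), ((0 : EuclideanSpace ℝ (Fin n)), (1 : ℝ))]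

section SeparatedProduct

variable {𝕜 : Type*} [NontriviallyNormedField 𝕜] {E F : Type*} [NormedAddCommGroup E]
  [NormedSpace 𝕜 E] [NormedAddCommGroup F] [NormedSpace 𝕜 F]

theorem iteratedFDeriv_two_apply_diag_eq_iteratedDeriv {G : Type*} [NormedAddCommGroup G]
    [NormedSpace 𝕜 G] {f : E → G} {x : E} (hf : ContDiffAt 𝕜 2 f x) (m : E) :
    iteratedFDeriv 𝕜 2 f x ![m, m] = iteratedDeriv 2 (fun t : 𝕜 => f (x + t • m)) 0 := by
  have hline : ContDiffAt 𝕜 2 (fun t : 𝕜 => x + t • m) 0 := by fun_prop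
  have hf' : ContDiffAt 𝕜 2 f (x + (0 : 𝕜) • m) := by simpa using hf
  have hderiv : deriv (fun t : 𝕜 => x + t • m) = fun _ => m := by
    funext t
    simpa using (((hasDerivAt_id t).smul_const m).const_add x).deriv
  rw [← Function.comp_def f, iteratedDeriv_vcomp_two hf' hline, iteratedDeriv_succ,
    iteratedDeriv_one, hderiv]
  simp [Matrix.vec_single_eq_const, Matrix.vecCons_const]

variable {f : E → 𝕜} {g : F → 𝕜} {x : E} {y : F}

theorem iteratedFDeriv_two_mul_fst_snd_apply_inl (hf : ContDiffAt 𝕜 2 f x)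
    (hg : ContDiffAt 𝕜 2 g y) (v : E) :
    iteratedFDeriv 𝕜 2 (fun q : E × F => f q.1 * g q.2) (x, y) ![(v, 0), (v, 0)] =
      iteratedFDeriv 𝕜 2 f x ![v, v] * g y := by
  have hfg : ContDiffAt 𝕜 2 (fun q : E × F => f q.1 * g q.2) (x, y) :=
    (hf.comp _ contDiffAt_fst).mul (hg.comp _ contDiffAt_snd)
  rw [iteratedFDeriv_two_apply_diag_eq_iteratedDeriv hfg,
    iteratedFDeriv_two_apply_diag_eq_iteratedDeriv hf]
  simp

theorem iteratedFDeriv_two_mul_fst_snd_apply_inr (hf : ContDiffAt 𝕜 2 f x)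
    (hg : ContDiffAt 𝕜 2 g y) (w : F) :
    iteratedFDeriv 𝕜 2 (fun q : E × F => f q.1 * g q.2) (x, y) ![(0, w), (0, w)] =
      f x * iteratedFDeriv 𝕜 2 g y ![w, w] := by
  have hfg : ContDiffAt 𝕜 2 (fun q : E × F => f q.1 * g q.2) (x, y) :=
    (hf.comp _ contDiffAt_fst).mul (hg.comp _ contDiffAt_snd)
  rw [iteratedFDeriv_two_apply_diag_eq_iteratedDeriv hfg,
    iteratedFDeriv_two_apply_diag_eq_iteratedDeriv hg]
  simp

end SeparatedProduct

theorem lapProd_mul_fst_snd {n : ℕ} {u : EuclideanSpace ℝ (Fin n) → ℝ} {g : ℝ → ℝ}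
    {x : EuclideanSpace ℝ (Fin n)} {t : ℝ} (hu : ContDiffAt ℝ 2 u x) (hg : ContDiffAt ℝ 2 g t) :
    lapProd (fun q => u q.1 * g q.2) (x, t) = lap u x * g t + u x * iteratedDeriv 2 g t := by
  simp only [lapProd, lap, Finset.sum_mul, iteratedFDeriv_two_mul_fst_snd_apply_inl hu hg,
    iteratedFDeriv_two_mul_fst_snd_apply_inr hu hg]
  rw [iteratedDeriv_eq_iteratedFDeriv, Matrix.vec_single_eq_const, Matrix.vecCons_const]

theorem Real.iteratedDeriv_two_cosh_const_mul (c t : ℝ) :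
    iteratedDeriv 2 (fun s => Real.cosh (c * s)) t = c ^ 2 * Real.cosh (c * t) := by
  have h := Real.iteratedDeriv_even_cosh 1
  rw [mul_one] at h
  rw [iteratedDeriv_comp_const_mul Real.contDiff_cosh, h]

theorem stmt4 {n : ℕ} (lam : ℝ) (hlam : lam < 0) (D : Set (EuclideanSpace ℝ (Fin n)))
    (hD : IsOpen D) (u : EuclideanSpace ℝ (Fin n) → ℝ) (hu : ContDiffOn ℝ 2 u D) :
    (∀ x ∈ D, (1 / 2) * lap u x = lam * u x) ↔
      ∀ p ∈ D ×ˢ (Set.univ : Set ℝ),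
        lapProd (fun q => u q.1 * Real.cosh (Real.sqrt (-(2 * lam)) * q.2)) p = 0 := by
  set c := Real.sqrt (-(2 * lam))
  have hc : c ^ 2 = -(2 * lam) := Real.sq_sqrt (by linarith)
  have hlapProd : ∀ x ∈ D, ∀ t : ℝ,
      lapProd (fun q => u q.1 * Real.cosh (c * q.2)) (x, t) =
        Real.cosh (c * t) * (lap u x - 2 * lam * u x) := by
    intro x hx t
    rw [lapProd_mul_fst_snd (g := fun s => Real.cosh (c * s))
      (hu.contDiffAt (hD.mem_nhds hx)) (by fun_prop), Real.iteratedDeriv_two_cosh_const_mul, hc]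
    ring
  constructor
  · rintro h ⟨x, t⟩ ⟨hx, -⟩
    rw [hlapProd x hx t, show lap u x - 2 * lam * u x = 0 by linarith [h x hx], mul_zero]
  · intro h x hx
    have h0 := h (x, 0) ⟨hx, Set.mem_univ _⟩
    rw [hlapProd x hx 0, mul_eq_zero, or_iff_right (Real.cosh_pos _).ne'] at h0
    linarith
end

section
/- (Duffin correspondence, Yukawa case, deterministic form.) Let λ > 0, let D ⊆ ℝⁿ be open, let f : ℝⁿ → ℝ, and let u : ℝⁿ → ℝ be twice continuously differentiable on D. Define ū(x,x') = u(x)·cos(√(2λ)·x'), f̄(y,y') = f(y)·cos(√(2λ)·y'), and I(λ) = (−π/(2√(2λ)), π/(2√(2λ))). Then the following are equivalent: (i) (1/2)Δu(x) − λu(x) = 0 for all x ∈ D and u = f on the frontier ∂D; (ii) Δū = 0 on the open set D × I(λ) ⊆ ℝⁿ × ℝ and ū = f̄ on the frontier ∂(D × I(λ)). -/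
open scoped BigOperators

/-! For a separated product `ū (x, s) = u x * g s` the Laplacian on `ℝⁿ × ℝ` is
`g s * Δu x + u x * g'' s`. For `g s = cos (√(2λ) s)` this is `2 g s * ((1/2) Δu x - λ u x)`, so
`ū` is harmonic on `D × I(λ)` exactly when `u` solves the Yukawa equation on `D` (look at `s = 0`,
where `g = 1`). The frontier of `D × I(λ)` is `closure D × ∂I(λ) ∪ ∂D × closure I(λ)`; `g` vanishes
on `∂I(λ)`, and on `∂D × {0}` the lifted boundary condition is the original one. -/

open Topology

section SecondDerivative

variable {𝕜 E G : Type*} [NontriviallyNormedField 𝕜] [NormedAddCommGroup E] [NormedSpace 𝕜 E]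
  [NormedAddCommGroup G] [NormedSpace 𝕜 G]

theorem iteratedFDeriv_two_apply_eq_fderiv_fderiv_apply {F : E → G} {p : E}
    (hF : DifferentiableAt 𝕜 (fderiv 𝕜 F) p) (v w : E) :
    iteratedFDeriv 𝕜 2 F p ![v, w] = fderiv 𝕜 (fun q => fderiv 𝕜 F q w) p v := by
  rw [iteratedFDeriv_two_apply, fderiv_clm_apply hF (differentiableAt_const w)]
  simp

theorem ContDiffAt.differentiableAt_fderiv {F : E → G} {p : E} (hF : ContDiffAt 𝕜 2 F p) :
    DifferentiableAt 𝕜 (fderiv 𝕜 F) p :=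
  (hF.fderiv_right (m := 1) le_rfl).differentiableAt one_ne_zero

end SecondDerivative

section DuffinLift

variable {E : Type*} [NormedAddCommGroup E] [NormedSpace ℝ E]

def duffinLift (u : E → ℝ) (g : ℝ → ℝ) : E × ℝ → ℝ := fun q => u q.1 * g q.2

theorem fderiv_duffinLift_apply {u : E → ℝ} {g : ℝ → ℝ} {x : E} {s : ℝ}
    (hu : DifferentiableAt ℝ u x) (hg : DifferentiableAt ℝ g s) (v : E) (t : ℝ) :
    fderiv ℝ (duffinLift u g) (x, s) (v, t) = g s * fderiv ℝ u x v + u x * (deriv g s * t) := by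
  have hu' : HasFDerivAt (fun q : E × ℝ => u q.1)
      ((fderiv ℝ u x).comp (ContinuousLinearMap.fst ℝ E ℝ)) (x, s) :=
    hu.hasFDerivAt.comp (x, s) hasFDerivAt_fst
  have hg' : HasFDerivAt (fun q : E × ℝ => g q.2)
      (deriv g s • ContinuousLinearMap.snd ℝ E ℝ) (x, s) :=
    hg.hasDerivAt.comp_hasFDerivAt (x, s) hasFDerivAt_snd
  have hlift : HasFDerivAt (duffinLift u g)
      (u x • deriv g s • ContinuousLinearMap.snd ℝ E ℝ
        + g s • (fderiv ℝ u x).comp (ContinuousLinearMap.fst ℝ E ℝ)) (x, s) :=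
    hu'.mul hg'
  rw [hlift.fderiv]
  simp only [add_apply, smul_apply, ContinuousLinearMap.coe_snd', ContinuousLinearMap.comp_apply,
    ContinuousLinearMap.coe_fst', smul_eq_mul]
  ring

theorem ContDiffAt.duffinLift {u : E → ℝ} {g : ℝ → ℝ} {x : E} {s : ℝ}
    (hu : ContDiffAt ℝ 2 u x) (hg : ContDiff ℝ 2 g) : ContDiffAt ℝ 2 (duffinLift u g) (x, s) :=
  (hu.comp (x, s) contDiffAt_fst).mul (hg.contDiffAt.comp (x, s) contDiffAt_snd)

variable {u : E → ℝ} {g : ℝ → ℝ} {x : E} {s : ℝ}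

theorem iteratedFDeriv_two_duffinLift_apply_inl (hu : ContDiffAt ℝ 2 u x) (hg : ContDiff ℝ 2 g)
    (v : E) :
    iteratedFDeriv ℝ 2 (duffinLift u g) (x, s) ![(v, 0), (v, 0)]
      = g s * iteratedFDeriv ℝ 2 u x ![v, v] := by
  have hgd : Differentiable ℝ g := hg.differentiable two_ne_zero
  have hfderiv : (fun q : E × ℝ => fderiv ℝ (duffinLift u g) q (v, 0))
      =ᶠ[𝓝 (x, s)] duffinLift (fun y => fderiv ℝ u y v) g := by
    filter_upwards [(hu.eventually (by simp)).prod_inl_nhds s] with ⟨y, t⟩ hy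
    rw [fderiv_duffinLift_apply (hy.differentiableAt two_ne_zero) (hgd t)]
    simp [duffinLift, mul_comm]
  rw [iteratedFDeriv_two_apply_eq_fderiv_fderiv_apply (hu.duffinLift hg).differentiableAt_fderiv,
    hfderiv.fderiv_eq, fderiv_duffinLift_apply _ (hgd s),
    iteratedFDeriv_two_apply_eq_fderiv_fderiv_apply hu.differentiableAt_fderiv]
  · ring
  · exact hu.differentiableAt_fderiv.clm_apply (differentiableAt_const v)

theorem iteratedFDeriv_two_duffinLift_apply_inr (hu : ContDiffAt ℝ 2 u x) (hg : ContDiff ℝ 2 g)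
    (t : ℝ) :
    iteratedFDeriv ℝ 2 (duffinLift u g) (x, s) ![(0, t), (0, t)]
      = u x * (deriv (deriv g) s * t * t) := by
  have hgd : Differentiable ℝ g := hg.differentiable two_ne_zero
  have hg'd : Differentiable ℝ (fun r => deriv g r * t) := hg.differentiable_deriv_two.mul_const t
  have hfderiv : (fun q : E × ℝ => fderiv ℝ (duffinLift u g) q (0, t))
      =ᶠ[𝓝 (x, s)] duffinLift u (fun r => deriv g r * t) := by
    filter_upwards [(hu.eventually (by simp)).prod_inl_nhds s] with ⟨y, r⟩ hy
    rw [fderiv_duffinLift_apply (hy.differentiableAt two_ne_zero) (hgd r)]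
    simp [duffinLift]
  rw [iteratedFDeriv_two_apply_eq_fderiv_fderiv_apply (hu.duffinLift hg).differentiableAt_fderiv,
    hfderiv.fderiv_eq, fderiv_duffinLift_apply (hu.differentiableAt two_ne_zero) (hg'd s),
    deriv_mul_const (hg.differentiable_deriv_two s)]
  simp

end DuffinLift

section Laplacian

variable {n : ℕ} {u : EuclideanSpace ℝ (Fin n) → ℝ}

theorem lapProd_duffinLift {g : ℝ → ℝ} {x : EuclideanSpace ℝ (Fin n)} {s : ℝ}
    (hu : ContDiffAt ℝ 2 u x) (hg : ContDiff ℝ 2 g) :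
    lapProd (duffinLift u g) (x, s) = g s * lap u x + u x * deriv (deriv g) s := by
  simp only [lapProd, lap, iteratedFDeriv_two_duffinLift_apply_inl hu hg,
    iteratedFDeriv_two_duffinLift_apply_inr hu hg, Finset.mul_sum, mul_one]

theorem deriv_deriv_cos_const_mul (c s : ℝ) :
    deriv (deriv fun r => Real.cos (c * r)) s = -(c ^ 2 * Real.cos (c * s)) := by
  have hcos : deriv (fun r => Real.cos (c * r)) = fun r => -(c * Real.sin (c * r)) := by
    funext r
    rw [deriv_comp_mul_left c Real.cos r, Real.deriv_cos', smul_eq_mul, mul_neg]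
  rw [hcos, deriv.fun_neg, deriv_const_mul_field, deriv_comp_mul_left c Real.sin s,
    Real.deriv_sin, smul_eq_mul]
  ring

theorem lapProd_duffinLift_cos {lam : ℝ} (hlam : 0 ≤ lam) {x : EuclideanSpace ℝ (Fin n)} {s : ℝ}
    (hu : ContDiffAt ℝ 2 u x) :
    lapProd (duffinLift u fun r => Real.cos (Real.sqrt (2 * lam) * r)) (x, s)
      = 2 * Real.cos (Real.sqrt (2 * lam) * s) * ((1 / 2) * lap u x - lam * u x) := by
  rw [lapProd_duffinLift hu (by fun_prop), deriv_deriv_cos_const_mul,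
    Real.sq_sqrt (by linarith)]
  ring

theorem yukawa_iff_lapProd_duffinLift_cos_eq_zero {lam : ℝ} (hlam : 0 ≤ lam)
    {D : Set (EuclideanSpace ℝ (Fin n))} (hD : IsOpen D) (hu : ContDiffOn ℝ 2 u D) {I : Set ℝ}
    (hI : 0 ∈ I) :
    (∀ x ∈ D, (1 / 2) * lap u x - lam * u x = 0) ↔
      ∀ p ∈ D ×ˢ I, lapProd (duffinLift u fun r => Real.cos (Real.sqrt (2 * lam) * r)) p = 0 := by
  have hu' : ∀ x ∈ D, ContDiffAt ℝ 2 u x := fun x hx => hu.contDiffAt (hD.mem_nhds hx)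
  constructor
  · rintro h ⟨x, s⟩ ⟨hx, -⟩
    rw [lapProd_duffinLift_cos hlam (hu' x hx), h x hx, mul_zero]
  · intro h x hx
    have := h (x, 0) ⟨hx, hI⟩
    rw [lapProd_duffinLift_cos hlam (hu' x hx)] at this
    simpa using this

end Laplacian

theorem forall_frontier_eq_iff_forall_frontier_prod_mul_eq {X : Type*} [TopologicalSpace X]
    {D : Set X} {I : Set ℝ} {u f : X → ℝ} {g : ℝ → ℝ} {s₀ : ℝ} (hs₀ : s₀ ∈ closure I)
    (hgs₀ : g s₀ ≠ 0) (hg : ∀ s ∈ frontier I, g s = 0) :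
    (∀ y ∈ frontier D, u y = f y) ↔ ∀ p ∈ frontier (D ×ˢ I), u p.1 * g p.2 = f p.1 * g p.2 := by
  rw [frontier_prod_eq]
  constructor
  · rintro h ⟨y, s⟩ (⟨-, hs⟩ | ⟨hy, -⟩)
    · rw [hg s hs, mul_zero, mul_zero]
    · rw [h y hy]
  · intro h y hy
    exact mul_right_cancel₀ hgs₀ (h (y, s₀) (Or.inr ⟨hy, hs₀⟩))

theorem cos_mul_eq_zero_of_mem_frontier_Ioo {c s : ℝ} (hc : 0 < c)
    (hs : s ∈ frontier (Set.Ioo (-(Real.pi / (2 * c))) (Real.pi / (2 * c)))) :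
    Real.cos (c * s) = 0 := by
  have hpi : c * (Real.pi / (2 * c)) = Real.pi / 2 := by field_simp
  rw [frontier_Ioo (by linarith [show 0 < Real.pi / (2 * c) by positivity])] at hs
  rcases hs with rfl | rfl
  · rw [mul_neg, hpi, Real.cos_neg, Real.cos_pi_div_two]
  · rw [hpi, Real.cos_pi_div_two]

theorem stmt8 {n : ℕ} (lam : ℝ) (hlam : 0 < lam) (D : Set (EuclideanSpace ℝ (Fin n)))
    (hD : IsOpen D) (f u : EuclideanSpace ℝ (Fin n) → ℝ) (hu : ContDiffOn ℝ 2 u D) :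
    ((∀ x ∈ D, (1 / 2) * lap u x - lam * u x = 0) ∧ ∀ y ∈ frontier D, u y = f y) ↔
      ((∀ p ∈ D ×ˢ Set.Ioo (-(Real.pi / (2 * Real.sqrt (2 * lam))))
            (Real.pi / (2 * Real.sqrt (2 * lam))),
          lapProd (fun q => u q.1 * Real.cos (Real.sqrt (2 * lam) * q.2)) p = 0) ∧
        ∀ p ∈ frontier (D ×ˢ Set.Ioo (-(Real.pi / (2 * Real.sqrt (2 * lam))))
            (Real.pi / (2 * Real.sqrt (2 * lam)))),
          u p.1 * Real.cos (Real.sqrt (2 * lam) * p.2)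
            = f p.1 * Real.cos (Real.sqrt (2 * lam) * p.2)) := by
  have hc : 0 < Real.sqrt (2 * lam) := Real.sqrt_pos.mpr (by linarith)
  have h0 : (0 : ℝ) ∈ Set.Ioo (-(Real.pi / (2 * Real.sqrt (2 * lam))))
      (Real.pi / (2 * Real.sqrt (2 * lam))) := by
    have hb : 0 < Real.pi / (2 * Real.sqrt (2 * lam)) := by positivity
    exact ⟨neg_lt_zero.mpr hb, hb⟩
  exact and_congr (yukawa_iff_lapProd_duffinLift_cos_eq_zero hlam.le hD hu h0)
    (forall_frontier_eq_iff_forall_frontier_prod_mul_eq (subset_closure h0) (by simp)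
      fun _ => cos_mul_eq_zero_of_mem_frontier_Ioo hc)
end

section
/- (Duffin correspondence, Helmholtz case, deterministic form.) Let λ < 0, let D ⊆ ℝⁿ be open, let f : ℝⁿ → ℝ, and let u : ℝⁿ → ℝ be twice continuously differentiable on D. Define ū(x,x') = u(x)·cosh(√(−2λ)·x') and f̄(y,y') = f(y)·cosh(√(−2λ)·y'). Then the following are equivalent: (i) (1/2)Δu(x) − λu(x) = 0 for all x ∈ D and u = f on the frontier ∂D; (ii) Δū = 0 on the open set D × ℝ ⊆ ℝⁿ × ℝ and ū = f̄ on the frontier ∂(D × ℝ). -/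
/-! With `c = √(-2λ)` the factor `g(x') = cosh (c x')` satisfies `g'' = c² g = -2λ g`, so the
Laplacian of the separable function `ū(x, x') = u(x) g(x')` is
`g(x') (Δu + c² u)(x) = 2 g(x') ((1/2) Δu - λ u)(x)`. Since `g > 0`, `Δū` vanishes on `D × ℝ`
exactly when the Helmholtz equation holds on `D`. Likewise `∂(D × ℝ) = ∂D × ℝ`, and the two
boundary conditions differ by the positive factor `g`. -/

open scoped BigOperators

open ContinuousLinearMap

section SeparableProduct

variable {E : Type*} [NormedAddCommGroup E] [NormedSpace ℝ E]
  {a : E → ℝ} {b b' : ℝ → ℝ} {b'' : ℝ} {p : E × ℝ}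

lemma hasFDerivAt_mul_prod {a' : E →L[ℝ] ℝ} {β : ℝ} (ha : HasFDerivAt a a' p.1)
    (hb : HasDerivAt b β p.2) :
    HasFDerivAt (fun q : E × ℝ => a q.1 * b q.2)
      (b p.2 • a'.comp (fst ℝ E ℝ) + (a p.1 * β) • snd ℝ E ℝ) p := by
  refine ((ha.comp p hasFDerivAt_fst).mul (hb.hasFDerivAt.comp p hasFDerivAt_snd)).congr_fderiv ?_
  ext v <;> simp [mul_comm]

lemma iteratedFDeriv_two_mul_prod_apply (ha : ContDiffAt ℝ 2 a p.1)
    (hb : ∀ s, HasDerivAt b (b' s) s) (hb' : HasDerivAt b' b'' p.2) (v w : E × ℝ) :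
    iteratedFDeriv ℝ 2 (fun q : E × ℝ => a q.1 * b q.2) p ![v, w]
      = b p.2 * iteratedFDeriv ℝ 2 a p.1 ![v.1, w.1]
        + b' p.2 * (v.2 * fderiv ℝ a p.1 w.1 + w.2 * fderiv ℝ a p.1 v.1)
        + b'' * a p.1 * v.2 * w.2 := by
  have ha_near : ∀ᶠ q : E × ℝ in nhds p, DifferentiableAt ℝ a q.1 :=
    continuousAt_fst.eventually ((ha.eventually (by simp)).mono
      fun x hx => hx.differentiableAt (by simp))
  have hda : DifferentiableAt ℝ (fderiv ℝ a) p.1 :=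
    (ha.fderiv_right (m := 1) le_rfl).differentiableAt one_ne_zero
  have hfderiv : fderiv ℝ (fun q : E × ℝ => a q.1 * b q.2) =ᶠ[nhds p]
      fun q => b q.2 • (fderiv ℝ a q.1).comp (fst ℝ E ℝ)
        + (a q.1 * b' q.2) • snd ℝ E ℝ := by
    filter_upwards [ha_near] with q hq
    exact (hasFDerivAt_mul_prod hq.hasFDerivAt (hb q.2)).fderiv
  have hdiff : DifferentiableAt ℝ (fderiv ℝ (fun q : E × ℝ => a q.1 * b q.2)) p := by
    rw [hfderiv.differentiableAt_iff]
    have := (hb p.2).differentiableAt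
    have := hb'.differentiableAt
    have := ha.differentiableAt (by simp)
    fun_prop
  have hderiv : HasFDerivAt (fun q => fderiv ℝ a q.1 w.1 * b q.2 + a q.1 * (w.2 * b' q.2)) _ p :=
    (hasFDerivAt_mul_prod (hda.hasFDerivAt.clm_apply (hasFDerivAt_const w.1 p.1)) (hb p.2)).add
      (hasFDerivAt_mul_prod (ha.differentiableAt (by simp)).hasFDerivAt (hb'.const_mul w.2))
  have happly : (fun q => fderiv ℝ (fun q : E × ℝ => a q.1 * b q.2) q w) =ᶠ[nhds p]
      fun q => fderiv ℝ a q.1 w.1 * b q.2 + a q.1 * (w.2 * b' q.2) := by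
    filter_upwards [hfderiv] with q hq
    simp only [hq, add_apply, smul_apply, comp_apply, coe_fst', coe_snd', smul_eq_mul]
    ring
  have hswap : fderiv ℝ (fderiv ℝ (fun q : E × ℝ => a q.1 * b q.2)) p v w
      = fderiv ℝ (fun q => fderiv ℝ (fun q : E × ℝ => a q.1 * b q.2) q w) p v := by
    simp [fderiv_clm_apply hdiff (differentiableAt_const w)]
  rw [iteratedFDeriv_two_apply, iteratedFDeriv_two_apply]
  simp only [Matrix.cons_val_zero, Matrix.cons_val_one]
  rw [hswap, happly.fderiv_eq, hderiv.fderiv]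
  simp only [comp_zero, zero_add, add_apply, smul_apply, comp_apply, coe_fst', coe_snd', flip_apply,
    smul_eq_mul]
  ring

end SeparableProduct

section Laplacian

variable {n : ℕ} {u : EuclideanSpace ℝ (Fin n) → ℝ} {p : EuclideanSpace ℝ (Fin n) × ℝ}

lemma lapProd_mul_prod {b b' : ℝ → ℝ} {b'' : ℝ} (hu : ContDiffAt ℝ 2 u p.1)
    (hb : ∀ s, HasDerivAt b (b' s) s) (hb' : HasDerivAt b' b'' p.2) :
    lapProd (fun q => u q.1 * b q.2) p = b p.2 * lap u p.1 + b'' * u p.1 := by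
  simp only [lapProd, lap, iteratedFDeriv_two_mul_prod_apply hu hb hb', Finset.mul_sum]
  simp [(iteratedFDeriv ℝ 2 u p.1).map_coord_zero (m := ![0, 0]) 0 rfl]

lemma lapProd_mul_cosh (hu : ContDiffAt ℝ 2 u p.1) (c : ℝ) :
    lapProd (fun q => u q.1 * Real.cosh (c * q.2)) p
      = Real.cosh (c * p.2) * (lap u p.1 + c ^ 2 * u p.1) := by
  have hcosh (s : ℝ) : HasDerivAt (fun t => Real.cosh (c * t)) (c * Real.sinh (c * s)) s := by
    simpa [mul_comm] using ((hasDerivAt_id s).const_mul c).cosh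
  have hsinh : HasDerivAt (fun t => c * Real.sinh (c * t)) (c ^ 2 * Real.cosh (c * p.2)) p.2 := by
    simpa [sq, mul_assoc, mul_comm, mul_left_comm] using
      (((hasDerivAt_id p.2).const_mul c).sinh).const_mul c
  rw [lapProd_mul_prod hu hcosh hsinh]
  ring

end Laplacian

theorem stmt9 {n : ℕ} (lam : ℝ) (hlam : lam < 0) (D : Set (EuclideanSpace ℝ (Fin n)))
    (hD : IsOpen D) (f u : EuclideanSpace ℝ (Fin n) → ℝ) (hu : ContDiffOn ℝ 2 u D) :
    ((∀ x ∈ D, (1 / 2) * lap u x - lam * u x = 0) ∧ ∀ y ∈ frontier D, u y = f y) ↔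
      ((∀ p ∈ D ×ˢ (Set.univ : Set ℝ),
          lapProd (fun q => u q.1 * Real.cosh (Real.sqrt (-(2 * lam)) * q.2)) p = 0) ∧
        ∀ p ∈ frontier (D ×ˢ (Set.univ : Set ℝ)),
          u p.1 * Real.cosh (Real.sqrt (-(2 * lam)) * p.2)
            = f p.1 * Real.cosh (Real.sqrt (-(2 * lam)) * p.2)) := by
  set c := Real.sqrt (-(2 * lam))
  have hc : c ^ 2 = -(2 * lam) := Real.sq_sqrt (by linarith)
  have hcosh (t : ℝ) : Real.cosh (c * t) ≠ 0 := (Real.cosh_pos _).ne'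
  have hpde : ∀ x ∈ D, ∀ t : ℝ,
      lapProd (fun q => u q.1 * Real.cosh (c * q.2)) (x, t) = 0
        ↔ (1 / 2) * lap u x - lam * u x = 0 := by
    intro x hx t
    rw [lapProd_mul_cosh (hu.contDiffAt (hD.mem_nhds hx)), mul_eq_zero, hc]
    simp only [hcosh, false_or]
    constructor <;> intro h <;> linarith
  refine and_congr ⟨?_, ?_⟩ ?_
  · rintro h ⟨x, t⟩ ⟨hx, -⟩
    exact (hpde x hx t).2 (h x hx)
  · intro h x hx
    exact (hpde x hx 0).1 (h (x, 0) ⟨hx, trivial⟩)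
  · simp [frontier_prod_univ_eq, mul_left_inj' (hcosh _)]
end

section
/- Let n ≥ 1 and let γ be the standard Gaussian probability measure on the Euclidean space ℝⁿ (the law of a vector of n independent standard normal random variables). Let N : ℝⁿ → ℝⁿ be the normalization map N(x) = ‖x‖⁻¹·x (with N(0) = 0). Then the pushforward measure ν = N_*γ is a probability measure, ν-almost every point lies on the unit sphere {x : ‖x‖ = 1}, and ν is invariant under every linear isometry equivalence R of ℝⁿ, i.e. R_*ν = ν. -/
/-! The coordinate Gaussian vector is Mathlib's `stdGaussian`, which is invariant under linear
isometries. The map `x ↦ ‖x‖⁻¹ • x` commutes with every linear isometry, so its pushforward of an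
invariant measure is again invariant; and since `stdGaussian` has no atoms in positive dimension,
almost every point is nonzero and is sent to the unit sphere. -/

open MeasureTheory ProbabilityTheory

section InvNormSMul

variable {E F : Type*} [NormedAddCommGroup E] [NormedSpace ℝ E] [NormedAddCommGroup F]
  [NormedSpace ℝ F]

lemma LinearIsometry.map_inv_norm_smul (R : E →ₗᵢ[ℝ] F) (x : E) :
    R (‖x‖⁻¹ • x) = ‖R x‖⁻¹ • R x := by
  rw [R.map_smul, R.norm_map]

variable [MeasurableSpace E] [BorelSpace E] [MeasurableSpace F] [BorelSpace F]

@[fun_prop]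
lemma measurable_inv_norm_smul : Measurable fun x : E ↦ ‖x‖⁻¹ • x := by
  fun_prop

lemma ae_norm_eq_one_map_inv_norm_smul {μ : Measure E} (hμ : ∀ᵐ x ∂μ, x ≠ 0) :
    ∀ᵐ y ∂μ.map (fun x : E ↦ ‖x‖⁻¹ • x), ‖y‖ = 1 := by
  rw [ae_map_iff measurable_inv_norm_smul.aemeasurable
    (measurableSet_eq_fun (by fun_prop) (by fun_prop))]
  filter_upwards [hμ] with x hx
  rw [norm_smul, norm_inv, norm_norm, inv_mul_cancel₀ (norm_ne_zero_iff.mpr hx)]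

lemma LinearIsometry.map_map_inv_norm_smul (R : E →ₗᵢ[ℝ] F) (μ : Measure E) :
    (μ.map fun x : E ↦ ‖x‖⁻¹ • x).map R = (μ.map R).map fun y : F ↦ ‖y‖⁻¹ • y := by
  rw [Measure.map_map R.continuous.measurable measurable_inv_norm_smul,
    Measure.map_map measurable_inv_norm_smul R.continuous.measurable]
  exact congrArg μ.map (funext R.map_inv_norm_smul)

end InvNormSMul

-- A Dirac measure gives every functional variance zero, while `stdGaussian` gives `⟪v, ·⟫`
-- variance `‖v‖²`.
instance ProbabilityTheory.nullSingletonClass_stdGaussian {E : Type*} [NormedAddCommGroup E]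
    [InnerProductSpace ℝ E] [FiniteDimensional ℝ E] [MeasurableSpace E] [BorelSpace E]
    [Nontrivial E] : NullSingletonClass (stdGaussian E) := by
  refine IsGaussian.nullSingletonClass fun x hx ↦ ?_
  obtain ⟨v, hv⟩ := exists_ne (0 : E)
  have hvar := variance_dual_stdGaussian (innerSL ℝ v)
  rw [hx, variance_dirac, innerSL_apply_norm] at hvar
  exact hv (norm_eq_zero.mp (pow_eq_zero_iff two_ne_zero |>.mp hvar.symm))

theorem stmt12 (n : ℕ) (hn : 1 ≤ n)
    (γ : Measure (EuclideanSpace ℝ (Fin n)))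
    (hγ : γ = Measure.map (MeasurableEquiv.toLp 2 (Fin n → ℝ))
        (Measure.pi fun _ : Fin n => gaussianReal 0 1))
    (N : EuclideanSpace ℝ (Fin n) → EuclideanSpace ℝ (Fin n))
    (hN : ∀ x, N x = ‖x‖⁻¹ • x)
    (ν : Measure (EuclideanSpace ℝ (Fin n))) (hν : ν = Measure.map N γ) :
    IsProbabilityMeasure ν ∧ (∀ᵐ x ∂ν, ‖x‖ = 1) ∧
      ∀ R : EuclideanSpace ℝ (Fin n) ≃ₗᵢ[ℝ] EuclideanSpace ℝ (Fin n),
        Measure.map R ν = ν := by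
  have : Nonempty (Fin n) := ⟨⟨0, hn⟩⟩
  obtain rfl : γ = stdGaussian _ := hγ.trans map_pi_eq_stdGaussian
  obtain rfl : N = fun x ↦ ‖x‖⁻¹ • x := funext hN
  subst hν
  refine ⟨Measure.isProbabilityMeasure_map (by fun_prop),
    ae_norm_eq_one_map_inv_norm_smul (Measure.ae_ne _ 0), fun R ↦ ?_⟩
  exact (R.toLinearIsometry.map_map_inv_norm_smul _).trans (congrArg _ (stdGaussian_map R))
end
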